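/- arXiv:0803.3335 — 2 statements merged into one kernel-verified Lean document; each statement's English description precedes it below -/
import Mathlib

section
/- If w is a permutation in S_n, j satisfies 1 ≤ j ≤ n-2, and w(j+2) lies strictly between w(j) and w(j+1), then w and the permutation w' obtained from w by swapping the values in positions j and j+1 have the same Robinson–Schensted insertion tableau (left tableau). -/
/-- The symmetric group `S_n`, realized as permutations of `ℤ` fixing everything
outside `{1, …, n}`. -/
def Sgrp (n : ℕ) : Set (Equiv.Perm ℤ) :=
  {w | ∀ i : ℤ, (i < 1 ∨ (n : ℤ) < i) → w i = i}

/-- The simple transposition `s_j` swapping `j` and `j+1`. -/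
def aswap (j : ℕ) : Equiv.Perm ℤ := Equiv.swap (j : ℤ) ((j : ℤ) + 1)

/-- Coxeter length on `S_n` with respect to the adjacent transpositions
`s_1, …, s_{n-1}`: minimal length of a word in these generators. -/
noncomputable def lenA (n : ℕ) (w : Equiv.Perm ℤ) : ℕ :=
  sInf {k | ∃ l : List (Equiv.Perm ℤ), l.length = k ∧
    (∀ g ∈ l, ∃ j : ℕ, 1 ≤ j ∧ j < n ∧ g = aswap j) ∧ l.prod = w}

/-- Row insertion: insert `x` into a row, returning the new row and the bumped
entry (if any). For distinct entries: `x` replaces the leftmost entry `> x`. -/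
def insertRow (x : ℕ) : List ℕ → List ℕ × Option ℕ
  | [] => ([x], none)
  | y :: ys =>
    if x < y then (x :: ys, some y)
    else (y :: (insertRow x ys).1, (insertRow x ys).2)

/-- Schensted insertion of `x` into a tableau given as its list of rows. -/
def insertTab : List (List ℕ) → ℕ → List (List ℕ)
  | [], x => [[x]]
  | row :: rest, x =>
    match insertRow x row with
    | (r, none) => r :: rest
    | (r, some y) => r :: insertTab rest y

/-- The Robinson–Schensted insertion (left) tableau `P(w)` of a word. -/
def Ptab (l : List ℕ) : List (List ℕ) := l.foldl insertTab []

/-- One-line notation `(w(1), …, w(n))` of a permutation in `S_n`. -/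
def oneLine (n : ℕ) (w : Equiv.Perm ℤ) : List ℕ :=
  (List.range' 1 n).map (fun j => (w (j : ℤ)).toNat)

/-!
Schensted insertion works row by row: inserting a word `u` into a tableau `R :: T` turns the
first row into a row depending only on `R` and `u`, and inserts the word of entries bumped out
of `R` into `T`. For a single weakly increasing row, a case analysis on where the three letters
fall shows that the two sides of an elementary Knuth move produce the same row, and bumped words
that are equal or again related by an elementary Knuth move. A move of the second kind can bump
a move of the first kind into the next row and conversely, so both kinds are handled together,
by induction on the number of rows. Finally, the one-line notation of `w * s_j` is that of `w`
with the entries in positions `j` and `j + 1` exchanged, and the betweenness hypothesis makes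
this a move of the second kind.
-/

@[simp]
theorem insertRow_nil (x : ℕ) : insertRow x [] = ([x], none) := rfl

@[simp]
theorem insertRow_cons_of_lt {x y : ℕ} (h : x < y) (ys : List ℕ) :
    insertRow x (y :: ys) = (x :: ys, some y) := by
  simp [insertRow, h]

@[simp]
theorem insertRow_cons_of_le {x y : ℕ} (h : y ≤ x) (ys : List ℕ) :
    insertRow x (y :: ys) = (y :: (insertRow x ys).1, (insertRow x ys).2) := by
  simp [insertRow, not_lt.2 h]

@[simp]
theorem insertRow_append_of_forall_le {x : ℕ} {L : List ℕ} (h : ∀ a ∈ L, a ≤ x)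
    (S : List ℕ) : insertRow x (L ++ S) = (L ++ (insertRow x S).1, (insertRow x S).2) := by
  induction L with
  | nil => rfl
  | cons a L ih =>
    rw [List.forall_mem_cons] at h
    simp [insertRow_cons_of_le h.1, ih h.2]

@[simp]
theorem insertRow_of_forall_le {x : ℕ} {L : List ℕ} (h : ∀ a ∈ L, a ≤ x) :
    insertRow x L = (L ++ [x], none) := by
  simpa using insertRow_append_of_forall_le h []

theorem mem_of_mem_insertRow_fst {x a : ℕ} {R : List ℕ} (h : a ∈ (insertRow x R).1) :
    a = x ∨ a ∈ R := by
  induction R with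
  | nil => simpa using h
  | cons r R ih =>
    by_cases hxr : x < r
    · rw [insertRow_cons_of_lt hxr] at h
      rcases List.mem_cons.1 h with rfl | h
      exacts [Or.inl rfl, Or.inr (List.mem_cons_of_mem r h)]
    · rw [insertRow_cons_of_le (not_lt.1 hxr)] at h
      rcases List.mem_cons.1 h with rfl | h
      · exact Or.inr List.mem_cons_self
      · exact (ih h).imp_right (List.mem_cons_of_mem r)

theorem insertRow_fst_pairwise {x : ℕ} {R : List ℕ} (hR : R.Pairwise (· ≤ ·)) :
    (insertRow x R).1.Pairwise (· ≤ ·) := by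
  induction R with
  | nil => simp
  | cons r R ih =>
    rw [List.pairwise_cons] at hR
    by_cases hxr : x < r
    · rw [insertRow_cons_of_lt hxr]
      exact List.pairwise_cons.2 ⟨fun b hb => hxr.le.trans (hR.1 b hb), hR.2⟩
    · rw [insertRow_cons_of_le (not_lt.1 hxr)]
      refine List.pairwise_cons.2 ⟨fun b hb => ?_, ih hR.2⟩
      rcases mem_of_mem_insertRow_fst hb with rfl | hb
      exacts [not_lt.1 hxr, hR.1 b hb]

theorem insertTab_cons (R : List ℕ) (rest : List (List ℕ)) (x : ℕ) :
    insertTab (R :: rest) x =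
      (insertRow x R).1 :: (insertRow x R).2.toList.foldl insertTab rest := by
  rw [insertTab]
  rcases insertRow x R with ⟨r, _ | y⟩ <;> rfl

theorem insertTab_pairwise {T : List (List ℕ)} (hT : ∀ R ∈ T, R.Pairwise (· ≤ ·)) (x : ℕ) :
    ∀ R ∈ insertTab T x, R.Pairwise (· ≤ ·) := by
  induction T generalizing x with
  | nil => simp [insertTab]
  | cons R rest ih =>
    rw [List.forall_mem_cons] at hT
    rw [insertTab_cons, List.forall_mem_cons]
    refine ⟨insertRow_fst_pairwise hT.1, ?_⟩
    rcases (insertRow x R).2 with _ | y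
    exacts [hT.2, ih hT.2 y]

theorem Ptab_pairwise (l : List ℕ) : ∀ R ∈ Ptab l, R.Pairwise (· ≤ ·) := by
  rw [Ptab, ← List.foldr_reverse]
  induction l.reverse with
  | nil => simp
  | cons x l ih => exact insertTab_pairwise ih x

@[simp]
def insertRowWord (R : List ℕ) : List ℕ → List ℕ × List ℕ
  | [] => (R, [])
  | x :: u => ((insertRowWord (insertRow x R).1 u).1,
      (insertRow x R).2.toList ++ (insertRowWord (insertRow x R).1 u).2)

theorem foldl_insertTab_cons (R : List ℕ) (rest : List (List ℕ)) (u : List ℕ) :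
    u.foldl insertTab (R :: rest) =
      (insertRowWord R u).1 :: (insertRowWord R u).2.foldl insertTab rest := by
  induction u generalizing R rest with
  | nil => rfl
  | cons x u ih => simp [insertTab_cons, ih]

inductive KnuthMove : List ℕ → List ℕ → Prop
  | first {x y z : ℕ} : z < x → x ≤ y → KnuthMove [x, y, z] [x, z, y]
  | second {x y z : ℕ} : x ≤ z → z < y → KnuthMove [x, y, z] [y, x, z]

theorem exists_append_forall_le_forall_lt {R : List ℕ} (hR : R.Pairwise (· ≤ ·)) (t : ℕ) :
    ∃ L S, R = L ++ S ∧ (∀ a ∈ L, a ≤ t) ∧ ∀ b ∈ S, t < b := by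
  induction R with
  | nil => exact ⟨[], [], rfl, by simp, by simp⟩
  | cons r R ih =>
    rw [List.pairwise_cons] at hR
    by_cases hrt : r ≤ t
    · obtain ⟨L, S, rfl, hL, hS⟩ := ih hR.2
      exact ⟨r :: L, S, rfl, List.forall_mem_cons.2 ⟨hrt, hL⟩, hS⟩
    · refine ⟨[], r :: R, rfl, by simp, List.forall_mem_cons.2 ⟨not_le.1 hrt, ?_⟩⟩
      exact fun b hb => (not_le.1 hrt).trans_le (hR.1 b hb)

theorem insertRowWord_swap_first_two {R : List ℕ} (hR : R.Pairwise (· ≤ ·)) {x y z : ℕ}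
    (hxz : x ≤ z) (hzy : z < y) :
    (insertRowWord R [x, y, z]).1 = (insertRowWord R [y, x, z]).1 ∧
      Relation.ReflGen KnuthMove (insertRowWord R [x, y, z]).2 (insertRowWord R [y, x, z]).2 := by
  -- Cut `R` into blocks `A ≤ x < B ≤ y < D` (and `B` further at `z`); once the bounds of the
  -- blocks are in context, the `@[simp]` lemmas on `insertRow` evaluate all six insertions.
  obtain ⟨A, M, rfl, hA, hM⟩ := exists_append_forall_le_forall_lt hR x
  have hMs := (List.pairwise_append.1 hR).2.1
  obtain ⟨B, D, rfl, hB, hD⟩ := exists_append_forall_le_forall_lt hMs y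
  have hAz : ∀ a ∈ A, a ≤ z := fun a ha => (hA a ha).trans hxz
  have hAy : ∀ a ∈ A, a ≤ y := fun a ha => (hAz a ha).trans hzy.le
  rcases B with _ | ⟨e, B⟩
  · rcases D with _ | ⟨d, D⟩
    · simp (disch := first | assumption | omega) [Relation.ReflGen.refl]
    obtain ⟨hyd, hD⟩ := List.forall_mem_cons.1 hD
    rcases D with _ | ⟨d', D⟩
    · simp (disch := first | assumption | omega) [Relation.ReflGen.refl]
    have hyd' : y < d' := hD d' List.mem_cons_self
    have hmove : KnuthMove [d, d', y] [d, y, d'] :=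
      .first hyd (List.rel_of_pairwise_cons (by simpa using hMs) List.mem_cons_self)
    simp (disch := first | assumption | omega) [Relation.ReflGen.single hmove]
  · have hBs := (List.pairwise_append.1 hMs).1
    obtain ⟨F, G, rfl, hF, hG⟩ := exists_append_forall_le_forall_lt hBs.of_cons z
    simp only [List.forall_mem_cons, List.forall_mem_append] at hB
    obtain ⟨hey, hFy, hGy⟩ := hB
    have hxe : x < e := hM e (by simp)
    rcases G with _ | ⟨g, G⟩
    · rcases D with _ | ⟨d, D⟩
      · simp (disch := first | assumption | omega) [Relation.ReflGen.refl]
      have hyd : y < d := hD d List.mem_cons_self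
      have hmove : KnuthMove [e, d, y] [d, e, y] := .second hey hyd
      simp (disch := first | assumption | omega) [Relation.ReflGen.single hmove]
    obtain ⟨hgy, hGy⟩ := List.forall_mem_cons.1 hGy
    have hzg : z < g := hG g List.mem_cons_self
    rcases D with _ | ⟨d, D⟩
    · simp (disch := first | assumption | omega) [Relation.ReflGen.refl]
    have hyd : y < d := hD d List.mem_cons_self
    have hmove : KnuthMove [e, d, g] [d, e, g] :=
      .second (List.rel_of_pairwise_cons hBs (by simp)) (hgy.trans_lt hyd)
    simp (disch := first | assumption | omega) [Relation.ReflGen.single hmove]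

theorem insertRowWord_swap_last_two {R : List ℕ} (hR : R.Pairwise (· ≤ ·)) {x y z : ℕ}
    (hzx : z < x) (hxy : x ≤ y) :
    (insertRowWord R [x, y, z]).1 = (insertRowWord R [x, z, y]).1 ∧
      Relation.ReflGen KnuthMove (insertRowWord R [x, y, z]).2 (insertRowWord R [x, z, y]).2 := by
  -- As above, with blocks `A ≤ z < B ≤ x < N` and `N.tail` cut at `y`.
  obtain ⟨A, M, rfl, hA, hM⟩ := exists_append_forall_le_forall_lt hR z
  have hMs := (List.pairwise_append.1 hR).2.1
  obtain ⟨B, N, rfl, hB, hN⟩ := exists_append_forall_le_forall_lt hMs x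
  have hNs := (List.pairwise_append.1 hMs).2.1
  have hAx : ∀ a ∈ A, a ≤ x := fun a ha => (hA a ha).trans hzx.le
  have hAy : ∀ a ∈ A, a ≤ y := fun a ha => (hAx a ha).trans hxy
  rcases B with _ | ⟨b, B⟩
  on_goal 2 =>
    obtain ⟨hbx, hB⟩ := List.forall_mem_cons.1 hB
    have hzb : z < b := hM b List.mem_cons_self
    have hBy : ∀ a ∈ B, a ≤ y := fun a ha => (hB a ha).trans hxy
  all_goals
    rcases N with _ | ⟨h, N⟩
    · simp (disch := first | assumption | omega) [Relation.ReflGen.refl]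
    have hxh : x < h := hN h List.mem_cons_self
    obtain ⟨P, Q, rfl, hP, hQ⟩ := exists_append_forall_le_forall_lt hNs.of_cons y
    rcases Q with _ | ⟨q, Q⟩
    · simp (disch := first | assumption | omega) [Relation.ReflGen.refl]
    have hyq : y < q := hQ q List.mem_cons_self
    have hmove : ∀ u, u < h → Relation.ReflGen KnuthMove [h, q, u] [h, u, q] :=
      fun u hu => .single (.first hu (List.rel_of_pairwise_cons hNs (by simp)))
    simp (disch := first | assumption | omega) [hmove]

theorem insertRowWord_of_knuthMove {R u v : List ℕ} (hR : R.Pairwise (· ≤ ·))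
    (h : KnuthMove u v) :
    (insertRowWord R u).1 = (insertRowWord R v).1 ∧
      Relation.ReflGen KnuthMove (insertRowWord R u).2 (insertRowWord R v).2 := by
  cases h with
  | first hzx hxy => exact insertRowWord_swap_last_two hR hzx hxy
  | second hxz hzy => exact insertRowWord_swap_first_two hR hxz hzy

theorem foldl_insertTab_of_knuthMove {T : List (List ℕ)} (hT : ∀ R ∈ T, R.Pairwise (· ≤ ·))
    {u v : List ℕ} (h : KnuthMove u v) : u.foldl insertTab T = v.foldl insertTab T := by
  induction T generalizing u v with
  | nil =>
    cases h <;> simp (disch := omega) [insertTab]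
  | cons R rest ih =>
    rw [List.forall_mem_cons] at hT
    obtain ⟨hrow, hbump⟩ := insertRowWord_of_knuthMove hT.1 h
    rw [foldl_insertTab_cons, foldl_insertTab_cons, hrow]
    congr 1
    generalize (insertRowWord R v).2 = bv at hbump ⊢
    cases hbump with
    | refl => rfl
    | single hbump => exact ih hT.2 hbump

theorem Ptab_append_of_knuthMove (p s : List ℕ) {u v : List ℕ} (h : KnuthMove u v) :
    Ptab (p ++ u ++ s) = Ptab (p ++ v ++ s) := by
  have hp := Ptab_pairwise p
  rw [Ptab] at hp
  simp only [Ptab, List.foldl_append, foldl_insertTab_of_knuthMove hp h]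

theorem knuthMove_second_toNat {a b c : ℤ} (hb : 0 < b) (hac : a < c) (hcb : c < b) :
    KnuthMove [a.toNat, b.toNat, c.toNat] [b.toNat, a.toNat, c.toNat] :=
  .second (Int.toNat_le_toNat hac.le) ((Int.toNat_lt_toNat hb).2 hcb)

theorem apply_pos_of_mem_Sgrp {n : ℕ} {w : Equiv.Perm ℤ} (hw : w ∈ Sgrp n) {i : ℤ}
    (hi : 1 ≤ i) : 0 < w i := by
  by_contra h
  have hfix : w (w i) = w i := hw (w i) (Or.inl (by omega))
  have := w.injective hfix
  omega

theorem oneLine_eq_map (n : ℕ) (w : Equiv.Perm ℤ) :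
    oneLine n w = (List.range' 1 n).map (fun i : ℕ => (w i).toNat) := by
  simp [oneLine, List.map_eq_flatMap, List.flatMap_assoc]

theorem oneLine_eq_append {n j : ℕ} (hj1 : 1 ≤ j) (hj2 : j + 2 ≤ n) (w : Equiv.Perm ℤ) :
    oneLine n w = (List.range' 1 (j - 1)).map (fun i : ℕ => (w i).toNat) ++
      [(w j).toNat, (w (j + 1)).toNat, (w (j + 2)).toNat] ++
      (List.range' (j + 3) (n - (j + 2))).map (fun i : ℕ => (w i).toNat) := by
  have hsplit : List.range' 1 n =
      List.range' 1 (j - 1) ++ List.range' j 3 ++ List.range' (j + 3) (n - (j + 2)) := by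
    have h1 := @List.range'_append_1 1 (j - 1) 3
    have h2 := @List.range'_append_1 1 (j - 1 + 3) (n - (j + 2))
    rw [show 1 + (j - 1) = j by omega] at h1
    rw [show 1 + (j - 1 + 3) = j + 3 by omega] at h2
    rw [h1, h2]
    congr 1
    omega
  rw [oneLine_eq_map, hsplit]
  simp [List.range'_succ, add_assoc]

theorem exists_oneLine_mul_aswap {n j : ℕ} (hj1 : 1 ≤ j) (hj2 : j + 2 ≤ n) (w : Equiv.Perm ℤ) :
    ∃ p s, oneLine n w = p ++ [(w j).toNat, (w (j + 1)).toNat, (w (j + 2)).toNat] ++ s ∧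
      oneLine n (w * aswap j) = p ++ [(w (j + 1)).toNat, (w j).toNat, (w (j + 2)).toNat] ++ s := by
  refine ⟨_, _, oneLine_eq_append hj1 hj2 w, ?_⟩
  have hfix : ∀ l : List ℕ, (∀ i ∈ l, i < j ∨ j + 1 < i) →
      l.map (fun i : ℕ => ((w * aswap j) i).toNat) = l.map fun i : ℕ => (w i).toNat := by
    refine fun l hl => List.map_congr_left fun i hi => ?_
    have := hl i hi
    rw [Equiv.Perm.mul_apply, aswap, Equiv.swap_apply_of_ne_of_ne] <;> omega
  rw [oneLine_eq_append hj1 hj2, hfix, hfix]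
  · simp [aswap, Equiv.swap_apply_of_ne_of_ne]
  all_goals intro i hi; rw [List.mem_range'_1] at hi; omega

/-- Knuth relation of the second kind: if `1 ≤ j ≤ n-2` and `w(j+2)` lies strictly
between `w(j)` and `w(j+1)`, then swapping the values in positions `j` and `j+1`
preserves the Robinson–Schensted insertion tableau. -/
theorem knuth_second_kind (n : ℕ) (w : Equiv.Perm ℤ) (hw : w ∈ Sgrp n)
    (j : ℕ) (hj1 : 1 ≤ j) (hj2 : j + 2 ≤ n)
    (hbetween : (w (j : ℤ) < w ((j : ℤ) + 2) ∧ w ((j : ℤ) + 2) < w ((j : ℤ) + 1)) ∨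
      (w ((j : ℤ) + 1) < w ((j : ℤ) + 2) ∧ w ((j : ℤ) + 2) < w (j : ℤ))) :
    Ptab (oneLine n (w * aswap j)) = Ptab (oneLine n w) := by
  obtain ⟨p, s, hone, hone_swap⟩ := exists_oneLine_mul_aswap hj1 hj2 w
  rw [hone, hone_swap]
  rcases hbetween with ⟨hlo, hhi⟩ | ⟨hlo, hhi⟩
  · have hpos : 0 < w (j + 1) := apply_pos_of_mem_Sgrp hw (by omega)
    exact (Ptab_append_of_knuthMove p s (knuthMove_second_toNat hpos hlo hhi)).symm
  · have hpos : 0 < w j := apply_pos_of_mem_Sgrp hw (by omega)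
    exact Ptab_append_of_knuthMove p s (knuthMove_second_toNat hpos hlo hhi)
end

section
/- In a standard domino tableau, moving through a cycle c changes the boxing of every domino in c: if the dominoes of c are boxed in T, they are unboxed in MT(T,c), and vice versa; moreover all dominoes in a single cycle have the same boxing. -/
/-- A standard domino tableau of rank `r` with `n` dominoes (1-indexed squares
`S_{i,j}`, `i,j ≥ 1`): the staircase core `{S_{i,j} : i+j < r+2}` is labeled `0`,
each label `1, …, n` occupies exactly two adjacent squares, labels increase
weakly along rows and columns, and the underlying shape is a Young diagram. -/
structure SDT (r n : ℕ) where
  cells : Finset (ℕ × ℕ)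
  lab : ℕ × ℕ → ℕ
  lab_outside : ∀ c, c ∉ cells → lab c = 0
  pos_cells : ∀ c ∈ cells, 1 ≤ c.1 ∧ 1 ≤ c.2
  young_row : ∀ i j : ℕ, (i, j + 1) ∈ cells → 1 ≤ j → (i, j) ∈ cells
  young_col : ∀ i j : ℕ, (i + 1, j) ∈ cells → 1 ≤ i → (i, j) ∈ cells
  core_mem : ∀ i j : ℕ, 1 ≤ i → 1 ≤ j → i + j < r + 2 → (i, j) ∈ cells
  core_zero : ∀ c ∈ cells, (lab c = 0 ↔ c.1 + c.2 < r + 2)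
  lab_le : ∀ c ∈ cells, lab c ≤ n
  domino : ∀ k : ℕ, 1 ≤ k → k ≤ n → ∃ a b : ℕ × ℕ, a ∈ cells ∧ b ∈ cells ∧
    (b = (a.1 + 1, a.2) ∨ b = (a.1, a.2 + 1)) ∧ lab a = k ∧ lab b = k ∧
    ∀ c ∈ cells, lab c = k → c = a ∨ c = b
  row_mono : ∀ i j : ℕ, (i, j) ∈ cells → (i, j + 1) ∈ cells →
    lab (i, j) ≤ lab (i, j + 1)
  col_mono : ∀ i j : ℕ, (i, j) ∈ cells → (i + 1, j) ∈ cells →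
    lab (i, j) ≤ lab (i + 1, j)

/-- The support of the domino labeled `k` in `T`. -/
def SDT.supp {r n : ℕ} (T : SDT r n) (k : ℕ) : Finset (ℕ × ℕ) :=
  T.cells.filter (fun c => T.lab c = k)

/-- A square `S_{i,j}` is fixed if `i + j` has the opposite parity to `r`. -/
def FixedSq (r : ℕ) (c : ℕ × ℕ) : Prop := (c.1 + c.2) % 2 ≠ r % 2

/-- A square is variable if it is not fixed, i.e. `i + j ≡ r (mod 2)`. -/
def VariableSq (r : ℕ) (c : ℕ × ℕ) : Prop := (c.1 + c.2) % 2 = r % 2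

/-- A variable square in an odd row is of type `X`. -/
def TypeX (r : ℕ) (c : ℕ × ℕ) : Prop := VariableSq r c ∧ c.1 % 2 = 1

/-- Extended label: `0` on squares with a vanishing coordinate (i.e. `i ≤ 0` or
`j ≤ 0`), `∞` on positive squares outside `T`, and the label of `T` otherwise. -/
def SDT.labE {r n : ℕ} (T : SDT r n) (c : ℕ × ℕ) : ℕ∞ :=
  if c.1 = 0 ∨ c.2 = 0 then 0 else if c ∈ T.cells then (T.lab c : ℕ∞) else ⊤

/-- Garfinkle's `D'(k,T)`: `s` is the support of the image of the domino labeled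
`k` under moving through, defined by the case analysis on the position of the
fixed square of the domino. -/
def IsSuppD' {r n : ℕ} (T : SDT r n) (k : ℕ) (s : Finset (ℕ × ℕ)) : Prop :=
  ∃ i j : ℕ, FixedSq r (i, j) ∧
    (((T.supp k = {(i, j), (i + 1, j)} ∨ T.supp k = {(i, j - 1), (i, j)}) ∧
        (((k : ℕ∞) < T.labE (i - 1, j + 1) ∧ s = {(i, j), (i - 1, j)}) ∨
         (T.labE (i - 1, j + 1) < (k : ℕ∞) ∧ s = {(i, j), (i, j + 1)}))) ∨
     ((T.supp k = {(i, j), (i - 1, j)} ∨ T.supp k = {(i, j + 1), (i, j)}) ∧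
        (((k : ℕ∞) < T.labE (i + 1, j - 1) ∧ s = {(i, j), (i, j - 1)}) ∨
         (T.labE (i + 1, j - 1) < (k : ℕ∞) ∧ s = {(i, j), (i + 1, j)}))))

open Classical in
/-- The support of `D'(k,T)`. -/
noncomputable def suppD' {r n : ℕ} (T : SDT r n) (k : ℕ) : Finset (ℕ × ℕ) :=
  if h : ∃ s, IsSuppD' T k s then h.choose else ∅

/-- One step of the relation generating the cycle: `l` and `m` interact if
`supp D(l) ∩ supp D'(m) ≠ ∅` or `supp D'(l) ∩ supp D(m) ≠ ∅`. -/
noncomputable def cycStep {r n : ℕ} (T : SDT r n) (m l : ℕ) : Prop :=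
  (T.supp l ∩ suppD' T m).Nonempty ∨ (suppD' T l ∩ T.supp m).Nonempty

/-- The cycle `c(k,T)` through `k`: all labels of `T` reachable from `k` by the
interaction relation. -/
noncomputable def cyc {r n : ℕ} (T : SDT r n) (k : ℕ) : Set ℕ :=
  {l | 1 ≤ l ∧ l ≤ n ∧ Relation.ReflTransGen (cycStep T) k l}

/-- `T'` is obtained from `T` by moving through the set of labels `c`: dominoes
in `c` move to their `D'` positions, all others stay. -/
noncomputable def IsMT {r n : ℕ} (T T' : SDT r n) (c : Set ℕ) : Prop :=
  (∀ l ∈ c, T'.supp l = suppD' T l) ∧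
  ∀ l : ℕ, 1 ≤ l → l ≤ n → l ∉ c → T'.supp l = T.supp l

/-- `c` is a cycle of `T`. -/
noncomputable def IsCycle {r n : ℕ} (T : SDT r n) (c : Set ℕ) : Prop :=
  ∃ k : ℕ, 1 ≤ k ∧ k ≤ n ∧ c = cyc T k

/-- `c` is a non-core open cycle of `T`: moving through it yields a rank-`r`
tableau (so the core is unchanged) of a different shape. -/
noncomputable def NonCoreOpen {r n : ℕ} (T : SDT r n) (c : Set ℕ) : Prop :=
  IsCycle T c ∧ ∃ T' : SDT r n, IsMT T T' c ∧ T'.cells ≠ T.cells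

/-- A set of squares is boxed if it is contained in a block
`{S_{i,j}, S_{i+1,j}, S_{i,j+1}, S_{i+1,j+1}}` with `S_{i,j}` of type `X`. -/
def BoxedSet (r : ℕ) (s : Finset (ℕ × ℕ)) : Prop :=
  ∃ i j : ℕ, TypeX r (i, j) ∧
    ↑s ⊆ ({(i, j), (i + 1, j), (i, j + 1), (i + 1, j + 1)} : Set (ℕ × ℕ))

/-- A domino tableau is somewhat special if all its non-core open cycles are
boxed. -/
noncomputable def SomewhatSpecial {r n : ℕ} (T : SDT r n) : Prop :=
  ∀ c, NonCoreOpen T c → ∀ l ∈ c, BoxedSet r (T.supp l)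

/-! The `2 × 2` blocks whose top-left square is of type `X` tile the quadrant, with the fixed
squares of each block on its anti-diagonal, and a set of squares is boxed iff it lies in one
block. So of the four neighbours of a fixed square `f`, the two in its block are either
{below, left} or {above, right}. Moving through pivots a domino about its fixed square from one
of these pairs to the other, which flips its boxing.

If `D(l)` meets `D'(m)` in a square `x` other than the fixed square of `D(m)`, then `x` is the
variable square of `D(l)` and the new variable square of `D'(m)`. Monotonicity of the labels
rules out that the fixed square of `D(l)` is diagonally opposite that of `D(m)`; in every other
position exactly one of the two fixed squares lies in the block of `x`, so `D(l)` is boxed iff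
`D'(m)` is not, iff `D(m)` is. Propagating this along the interaction relation shows that the
boxing is constant on a cycle. -/

/-- The block containing `c`: rows pair up as `{2a + 1, 2a + 2}` and columns as `{j, j + 1}`
with `j ≡ r + 1 (mod 2)`. -/
def boxOf (r : ℕ) (c : ℕ × ℕ) : ℕ × ℕ := ((c.1 - 1) / 2, (c.2 + r + 1) / 2)

theorem boxedSet_iff {r : ℕ} {s : Finset (ℕ × ℕ)}
    (hs : ∀ c ∈ s, 1 ≤ c.1 ∧ 1 ≤ c.2) :
    BoxedSet r s ↔ ∀ p ∈ s, ∀ q ∈ s, boxOf r p = boxOf r q := by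
  unfold BoxedSet TypeX VariableSq
  constructor
  · rintro ⟨i, j, ⟨hij, hi⟩, hsub⟩ p hp q hq
    have hp' := hsub hp
    have hq' := hsub hq
    simp only [Set.mem_insert_iff, Set.mem_singleton_iff, Prod.ext_iff] at hp' hq'
    simp only [boxOf, Prod.ext_iff]
    omega
  · intro hbox
    rcases s.eq_empty_or_nonempty with rfl | ⟨p, hp⟩
    · exact ⟨1, r + 1, ⟨by omega, rfl⟩, by simp⟩
    have hp' := hs p hp
    refine ⟨2 * ((p.1 - 1) / 2) + 1, 2 * ((p.2 + r + 1) / 2) - (r + 1),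
      ⟨by dsimp only; omega, by dsimp only; omega⟩, ?_⟩
    intro q hq
    have hpq := hbox p hp q hq
    have hq' := hs q hq
    simp only [boxOf, Prod.ext_iff] at hpq
    simp only [Set.mem_insert_iff, Set.mem_singleton_iff, Prod.ext_iff]
    omega

theorem boxedSet_pair_iff {r : ℕ} {p q : ℕ × ℕ} (hp : 1 ≤ p.1 ∧ 1 ≤ p.2)
    (hq : 1 ≤ q.1 ∧ 1 ≤ q.2) : BoxedSet r {p, q} ↔ boxOf r p = boxOf r q := by
  rw [boxedSet_iff (by simp [hp, hq])]
  simp only [Finset.mem_insert, Finset.mem_singleton, forall_eq_or_imp, forall_eq, true_and,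
    and_true]
  exact ⟨And.left, fun h => ⟨h, h.symm⟩⟩

/-- The domino `{f, v}` pivots about its fixed square `f` to `{f, w}` as in `IsSuppD'`; `d` is
the square diagonally opposite `f` in the `2 × 2` square spanned by `f` and `w` whose label
decides where `w` lies. -/
def Pivot (f v w d : ℕ × ℕ) : Prop :=
  ((v = (f.1 + 1, f.2) ∨ v = (f.1, f.2 - 1)) ∧ (w = (f.1 - 1, f.2) ∨ w = (f.1, f.2 + 1)) ∧
      d = (f.1 - 1, f.2 + 1)) ∨
    ((v = (f.1 - 1, f.2) ∨ v = (f.1, f.2 + 1)) ∧ (w = (f.1, f.2 - 1) ∨ w = (f.1 + 1, f.2)) ∧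
      d = (f.1 + 1, f.2 - 1))

namespace Pivot

variable {r : ℕ} {f v w d : ℕ × ℕ}

theorem variableSq (hf : FixedSq r f) (hf' : 1 ≤ f.1 ∧ 1 ≤ f.2) (h : Pivot f v w d) :
    VariableSq r v ∧ VariableSq r w := by
  obtain ⟨i, j⟩ := f
  unfold FixedSq at hf
  unfold VariableSq
  rcases h with ⟨hv | hv, hw | hw, -⟩ | ⟨hv | hv, hw | hw, -⟩ <;> subst hv hw <;>
    simp only at hf hf' ⊢ <;> omega

theorem boxOf_eq_iff_ne (hf : FixedSq r f) (h : Pivot f v w d) (hv : 1 ≤ v.1 ∧ 1 ≤ v.2)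
    (hw : 1 ≤ w.1 ∧ 1 ≤ w.2) : boxOf r f = boxOf r v ↔ boxOf r f ≠ boxOf r w := by
  obtain ⟨i, j⟩ := f
  unfold FixedSq at hf
  rcases h with ⟨hv' | hv', hw' | hw', -⟩ | ⟨hv' | hv', hw' | hw', -⟩ <;> subst hv' hw' <;>
    simp only [boxOf, Prod.ext_iff, ne_eq, and_true, true_and] at hf hv hw ⊢ <;> omega

theorem boxOf_eq_iff_ne_of_pivot {g w' d' : ℕ × ℕ} (hf : FixedSq r f) (hg : FixedSq r g)
    (h : Pivot f v w d) (hg_piv : Pivot g w w' d') (hgf : g ≠ f) (hgd : g ≠ d)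
    (hf' : 1 ≤ f.1 ∧ 1 ≤ f.2) (hg' : 1 ≤ g.1 ∧ 1 ≤ g.2) (hw : 1 ≤ w.1 ∧ 1 ≤ w.2) :
    boxOf r g = boxOf r w ↔ boxOf r f ≠ boxOf r w := by
  obtain ⟨i, j⟩ := f
  obtain ⟨k, l⟩ := g
  unfold FixedSq at hf hg
  rcases h with ⟨-, hw' | hw', rfl⟩ | ⟨-, hw' | hw', rfl⟩ <;> subst hw' <;>
    rcases hg_piv with ⟨hu | hu, -⟩ | ⟨hu | hu, -⟩ <;>
    simp only [boxOf, Prod.ext_iff, ne_eq, and_true, true_and]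
      at hf hf' hg hg' hw hgf hgd hu ⊢ <;>
    omega

end Pivot

namespace SDT

variable {r n : ℕ} (T : SDT r n)

theorem mem_supp {k : ℕ} {c : ℕ × ℕ} : c ∈ T.supp k ↔ c ∈ T.cells ∧ T.lab c = k :=
  Finset.mem_filter

theorem pos_of_mem_supp {k : ℕ} {c : ℕ × ℕ} (h : c ∈ T.supp k) : 1 ≤ c.1 ∧ 1 ≤ c.2 :=
  T.pos_cells c (T.mem_supp.1 h).1

theorem labE_of_mem {c : ℕ × ℕ} (h : c ∈ T.cells) : T.labE c = T.lab c := by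
  have := T.pos_cells c h
  rw [labE, if_neg (by omega), if_pos h]

theorem supp_nonempty {k : ℕ} (h1 : 1 ≤ k) (h2 : k ≤ n) : (T.supp k).Nonempty := by
  obtain ⟨a, -, ha, -, -, hla, -⟩ := T.domino k h1 h2
  exact ⟨a, T.mem_supp.2 ⟨ha, hla⟩⟩

/-- Two distinct squares of the core force `r ≥ 2`, and then the core contains the three squares
`S_{1,1}, S_{1,2}, S_{2,1}`. -/
theorem supp_zero_ne_pair {p q : ℕ × ℕ} (hpq : p ≠ q) : T.supp 0 ≠ {p, q} := by
  intro h
  have core_iff : ∀ c, c ∈ T.supp 0 ↔ 1 ≤ c.1 ∧ 1 ≤ c.2 ∧ c.1 + c.2 < r + 2 := by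
    refine fun c => ⟨fun hc => ?_, fun ⟨h1, h2, h3⟩ => ?_⟩
    · obtain ⟨hc, hlab⟩ := T.mem_supp.1 hc
      exact ⟨(T.pos_cells c hc).1, (T.pos_cells c hc).2, (T.core_zero c hc).1 hlab⟩
    · have hc := T.core_mem c.1 c.2 h1 h2 h3
      exact T.mem_supp.2 ⟨hc, (T.core_zero c hc).2 h3⟩
  simp only [h, Finset.mem_insert, Finset.mem_singleton] at core_iff
  have hp := (core_iff p).1 (Or.inl rfl)
  have hq := (core_iff q).1 (Or.inr rfl)
  have h11 := (core_iff (1, 1)).2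
  have h12 := (core_iff (1, 2)).2
  have h21 := (core_iff (2, 1)).2
  simp only [Prod.ext_iff, ne_eq] at hpq h11 h12 h21
  omega

end SDT

theorem isSuppD'_suppD' {r n : ℕ} {T : SDT r n} {k : ℕ} (h : (suppD' T k).Nonempty) :
    IsSuppD' T k (suppD' T k) := by
  by_cases hex : ∃ s, IsSuppD' T k s
  · rw [suppD', dif_pos hex]
    exact hex.choose_spec
  · rw [suppD', dif_neg hex] at h
    exact absurd h Finset.not_nonempty_empty

namespace IsSuppD'

variable {r n : ℕ} {T : SDT r n} {k : ℕ} {s : Finset (ℕ × ℕ)}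

theorem exists_pivot (h : IsSuppD' T k s) :
    ∃ f v w d, FixedSq r f ∧ T.supp k = {f, v} ∧ s = {f, w} ∧ Pivot f v w d ∧
      (w ∈ T.cells → T.labE d ≠ T.lab w) := by
  obtain ⟨i, j, hfix, hcase⟩ := h
  have hf : (i, j) ∈ T.supp k := by
    rcases hcase with ⟨hD | hD, -⟩ | ⟨hD | hD, -⟩ <;> simp [hD]
  obtain ⟨hf_cells, hf_lab⟩ := T.mem_supp.1 hf
  obtain ⟨hi, hj⟩ := T.pos_cells _ hf_cells
  have above : (i - 1, j) ∈ T.cells → T.lab (i - 1, j) ≤ k := fun hw => by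
    have := T.col_mono (i - 1) j hw (by rwa [Nat.sub_add_cancel hi])
    rwa [Nat.sub_add_cancel hi, hf_lab] at this
  have left : (i, j - 1) ∈ T.cells → T.lab (i, j - 1) ≤ k := fun hw => by
    have := T.row_mono i (j - 1) hw (by rwa [Nat.sub_add_cancel hj])
    rwa [Nat.sub_add_cancel hj, hf_lab] at this
  have right : (i, j + 1) ∈ T.cells → k ≤ T.lab (i, j + 1) :=
    fun hw => hf_lab ▸ T.row_mono i j hf_cells hw
  have below : (i + 1, j) ∈ T.cells → k ≤ T.lab (i + 1, j) :=
    fun hw => hf_lab ▸ T.col_mono i j hf_cells hw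
  rcases hcase with ⟨hD, hw⟩ | ⟨hD, hw⟩
  · obtain ⟨v, hDv, hv⟩ :
        ∃ v, T.supp k = {(i, j), v} ∧ (v = (i + 1, j) ∨ v = (i, j - 1)) := by
      rcases hD with hD | hD
      exacts [⟨_, hD, Or.inl rfl⟩, ⟨_, hD.trans (Finset.pair_comm _ _), Or.inr rfl⟩]
    rcases hw with ⟨hlt, rfl⟩ | ⟨hlt, rfl⟩
    · refine ⟨_, v, _, _, hfix, hDv, rfl, Or.inl ⟨hv, Or.inl rfl, rfl⟩, fun hw heq => ?_⟩
      rw [heq] at hlt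
      exact hlt.not_ge (by exact_mod_cast above hw)
    · refine ⟨_, v, _, _, hfix, hDv, rfl, Or.inl ⟨hv, Or.inr rfl, rfl⟩, fun hw heq => ?_⟩
      rw [heq] at hlt
      exact hlt.not_ge (by exact_mod_cast right hw)
  · obtain ⟨v, hDv, hv⟩ :
        ∃ v, T.supp k = {(i, j), v} ∧ (v = (i - 1, j) ∨ v = (i, j + 1)) := by
      rcases hD with hD | hD
      exacts [⟨_, hD, Or.inl rfl⟩, ⟨_, hD.trans (Finset.pair_comm _ _), Or.inr rfl⟩]
    rcases hw with ⟨hlt, rfl⟩ | ⟨hlt, rfl⟩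
    · refine ⟨_, v, _, _, hfix, hDv, rfl, Or.inr ⟨hv, Or.inl rfl, rfl⟩, fun hw heq => ?_⟩
      rw [heq] at hlt
      exact hlt.not_ge (by exact_mod_cast left hw)
    · refine ⟨_, v, _, _, hfix, hDv, rfl, Or.inr ⟨hv, Or.inr rfl, rfl⟩, fun hw heq => ?_⟩
      rw [heq] at hlt
      exact hlt.not_ge (by exact_mod_cast below hw)

theorem label_mem (h : IsSuppD' T k s) : 1 ≤ k ∧ k ≤ n := by
  obtain ⟨f, v, w, d, hf, hD, -, hpiv, -⟩ := h.exists_pivot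
  obtain ⟨hf_cells, hf_lab⟩ := T.mem_supp.1 (show f ∈ T.supp k by simp [hD])
  refine ⟨Nat.one_le_iff_ne_zero.2 ?_, hf_lab ▸ T.lab_le f hf_cells⟩
  rintro rfl
  have hv := (hpiv.variableSq hf (T.pos_cells f hf_cells)).1
  exact T.supp_zero_ne_pair (fun hfv => hf (by rwa [hfv])) hD

/-- The fixed square of `D(k)` lies outside the core, so by parity its sum of coordinates is at
least `r + 3`, and its neighbours lie outside the core too. -/
theorem label_mem_of_mem (h : IsSuppD' T k s) {m : ℕ} {x : ℕ × ℕ} (hx : x ∈ T.supp m)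
    (hxs : x ∈ s) : 1 ≤ m ∧ m ≤ n := by
  obtain ⟨hx_cells, hx_lab⟩ := T.mem_supp.1 hx
  refine ⟨Nat.one_le_iff_ne_zero.2 fun hm => ?_, hx_lab ▸ T.lab_le x hx_cells⟩
  have hx_core : x.1 + x.2 < r + 2 := (T.core_zero x hx_cells).1 (hx_lab.trans hm)
  have hk := h.label_mem.1
  obtain ⟨f, v, w, d, hf, hD, rfl, hpiv, -⟩ := h.exists_pivot
  obtain ⟨hf_cells, hf_lab⟩ := T.mem_supp.1 (show f ∈ T.supp k by simp [hD])
  have hf_out : r + 2 ≤ f.1 + f.2 := by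
    by_contra hlt
    have := (T.core_zero f hf_cells).2 (by omega)
    omega
  unfold FixedSq at hf
  rw [Finset.mem_insert, Finset.mem_singleton] at hxs
  rcases hxs with rfl | rfl
  · omega
  · rcases hpiv with ⟨-, rfl | rfl, -⟩ | ⟨-, rfl | rfl, -⟩ <;> simp only at hx_core <;>
      omega

theorem boxedSet_supp_iff_not (h : IsSuppD' T k s) (hs : ∀ c ∈ s, 1 ≤ c.1 ∧ 1 ≤ c.2) :
    BoxedSet r (T.supp k) ↔ ¬ BoxedSet r s := by
  obtain ⟨f, v, w, d, hf, hD, rfl, hpiv, -⟩ := h.exists_pivot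
  have hv := T.pos_of_mem_supp (show v ∈ T.supp k by simp [hD])
  have hf' := hs f (by simp)
  have hw := hs w (by simp)
  rw [hD, boxedSet_pair_iff hf' hv, boxedSet_pair_iff hf' hw, hpiv.boxOf_eq_iff_ne hf hv hw]

theorem boxedSet_supp_iff_of_mem {a b : ℕ} {t : Finset (ℕ × ℕ)} {x : ℕ × ℕ}
    (ha : IsSuppD' T a s) (hb : IsSuppD' T b t) (hx : x ∈ T.supp b) (hxs : x ∈ s) :
    BoxedSet r (T.supp a) ↔ BoxedSet r (T.supp b) := by
  rcases eq_or_ne a b with rfl | hab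
  · rfl
  obtain ⟨f, v, w, d, hf, hDa, rfl, hpiv, hlab⟩ := ha.exists_pivot
  obtain ⟨g, u, w', d', hg, hDb, -, hg_piv, -⟩ := hb.exists_pivot
  obtain ⟨hx_cells, hx_lab⟩ := T.mem_supp.1 hx
  obtain ⟨hf_cells, hf_lab⟩ := T.mem_supp.1 (show f ∈ T.supp a by simp [hDa])
  obtain ⟨hg_cells, hg_lab⟩ := T.mem_supp.1 (show g ∈ T.supp b by simp [hDb])
  have hf' := T.pos_cells f hf_cells
  have hg' := T.pos_cells g hg_cells
  have hx' := T.pos_cells x hx_cells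
  obtain rfl : x = w := by
    rw [Finset.mem_insert, Finset.mem_singleton] at hxs
    exact hxs.resolve_left fun hxf => hab (by rw [← hf_lab, ← hx_lab, hxf])
  obtain rfl : x = u := by
    rw [hDb, Finset.mem_insert, Finset.mem_singleton] at hx
    exact hx.resolve_left fun hxg => hg (hxg ▸ (hpiv.variableSq hf hf').2)
  have hgf : g ≠ f := fun hgf => hab (by rw [← hf_lab, ← hg_lab, hgf])
  have hgd : g ≠ d := fun hgd =>
    hlab hx_cells (by rw [← hgd, T.labE_of_mem hg_cells, hg_lab, hx_lab])
  rw [ha.boxedSet_supp_iff_not (by simp [hf', hx']), hDb, boxedSet_pair_iff hg' hx',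
    boxedSet_pair_iff hf' hx', hpiv.boxOf_eq_iff_ne_of_pivot hf hg hg_piv hgf hgd hf' hg' hx']

end IsSuppD'

theorem cycStep_bounds {r n : ℕ} {T : SDT r n} {l m : ℕ} (h : cycStep T l m) :
    (1 ≤ l ∧ l ≤ n) ∧ (1 ≤ m ∧ m ≤ n) := by
  have key : ∀ {a b : ℕ}, (T.supp b ∩ suppD' T a).Nonempty →
      (1 ≤ a ∧ a ≤ n) ∧ (1 ≤ b ∧ b ≤ n) := by
    rintro a b ⟨x, hx⟩
    rw [Finset.mem_inter] at hx
    have ha := isSuppD'_suppD' ⟨x, hx.2⟩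
    exact ⟨ha.label_mem, ha.label_mem_of_mem hx.1 hx.2⟩
  rcases h with h | h
  · exact key h
  · rw [Finset.inter_comm] at h
    exact (key h).symm

theorem iff_of_mem_cyc {r n : ℕ} {T : SDT r n} {k : ℕ} {P : ℕ → Prop}
    (hP : ∀ l ∈ cyc T k, ∀ m ∈ cyc T k, cycStep T l m → (P l ↔ P m)) :
    ∀ l ∈ cyc T k, P l ↔ P k := by
  rintro l ⟨-, -, hl⟩
  induction hl with
  | refl => rfl
  | tail hkl hlm ih =>
    obtain ⟨⟨hl1, hl2⟩, hm1, hm2⟩ := cycStep_bounds hlm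
    exact (hP _ ⟨hl1, hl2, hkl⟩ _ ⟨hm1, hm2, hkl.tail hlm⟩ hlm).symm.trans ih

theorem movingThrough_changes_boxing_general (r n : ℕ) (T T' : SDT r n) (k : ℕ)
    (h : IsMT T T' (cyc T k)) :
    (∀ l ∈ cyc T k, (BoxedSet r (T.supp l) ↔ ¬ BoxedSet r (T'.supp l))) ∧
    (∀ l ∈ cyc T k, ∀ m ∈ cyc T k,
      (BoxedSet r (T.supp l) ↔ BoxedSet r (T.supp m))) := by
  have hD' : ∀ l ∈ cyc T k, IsSuppD' T l (suppD' T l) := fun l hl =>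
    isSuppD'_suppD' (h.1 l hl ▸ T'.supp_nonempty hl.1 hl.2.1)
  have hstep : ∀ l ∈ cyc T k, ∀ m ∈ cyc T k, cycStep T l m →
      (BoxedSet r (T.supp l) ↔ BoxedSet r (T.supp m)) := by
    rintro l hl m hm (⟨x, hx⟩ | ⟨x, hx⟩) <;> rw [Finset.mem_inter] at hx
    · exact (hD' l hl).boxedSet_supp_iff_of_mem (hD' m hm) hx.1 hx.2
    · exact ((hD' m hm).boxedSet_supp_iff_of_mem (hD' l hl) hx.2 hx.1).symm
  have hcyc := iff_of_mem_cyc hstep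
  refine ⟨fun l hl => ?_, fun l hl m hm => (hcyc l hl).trans (hcyc m hm).symm⟩
  have hl' : IsSuppD' T l (T'.supp l) := (h.1 l hl).symm ▸ hD' l hl
  exact hl'.boxedSet_supp_iff_not fun c => T'.pos_of_mem_supp

/-- Moving through a cycle changes the boxing of every domino in the cycle, and
all dominoes in a single cycle have the same boxing. -/
theorem movingThrough_changes_boxing (r n : ℕ) (T T' : SDT r n) (k : ℕ)
    (hk1 : 1 ≤ k) (hk2 : k ≤ n) (h : IsMT T T' (cyc T k)) :
    (∀ l ∈ cyc T k, (BoxedSet r (T.supp l) ↔ ¬ BoxedSet r (T'.supp l))) ∧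
    (∀ l ∈ cyc T k, ∀ m ∈ cyc T k,
      (BoxedSet r (T.supp l) ↔ BoxedSet r (T.supp m))) :=
  movingThrough_changes_boxing_general r n T T' k h
end
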